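/- arXiv:2006.08272 — 8 statements merged into one kernel-verified Lean document; each statement's English description precedes it below -/
import Mathlib

section
/- Let X be a w×w matrix whose entries are w² distinct indeterminates (a generic symbolic matrix), and let Y = I_w ⊗ X (Kronecker product). If T and S are w²×w² matrices over F such that T·Y = Yᵀ·S (as matrices of linear forms), then T = 0 and S = 0. -/
/-!
Taking the coefficient of `x_{uv}` on both sides turns `T (I ⊗ X) = (I ⊗ X)ᵀ S` into
`T (I ⊗ E_{uv}) = (I ⊗ E_{uv})ᵀ S` for every matrix unit `E_{uv}`. Entry `((a,b),(c,d))` of this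
reads `[v = d] T_{(a,b),(c,u)} = [v = b] S_{(a,u),(c,d)}`; since `w ≥ 2`, `v` can be chosen equal to
exactly one of `b` and `d`, which kills every entry of `T` and of `S`.
-/

open Matrix Kronecker

namespace Matrix

variable {l n p q R : Type*} [Fintype n]

-- The type ascriptions on rectangular products keep `CStarMatrix`'s default `HMul` instance out.
theorem mul_one_kronecker_apply [NonAssocSemiring R] [Fintype p] [DecidableEq p]
    (A : Matrix l (p × n) R) (M : Matrix n q R) (i : l) (c : p) (d : q) :
    (A * ((1 : Matrix p p R) ⊗ₖ M) : Matrix l (p × q) R) i (c, d) =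
      (A.submatrix id (Prod.mk c) * M : Matrix l q R) i d := by
  simp [mul_apply, Fintype.sum_prod_type, one_apply, ite_mul, Finset.sum_ite_eq']

theorem one_kronecker_transpose_mul_apply [NonAssocSemiring R] [Fintype l] [DecidableEq l]
    (M : Matrix n q R) (B : Matrix (l × n) p R) (a : l) (b : q) (j : p) :
    (((1 : Matrix l l R) ⊗ₖ M)ᵀ * B : Matrix (l × q) p R) (a, b) j =
      (Mᵀ * B.submatrix (Prod.mk a) id : Matrix q p R) b j := by
  simp [mul_apply, Fintype.sum_prod_type, one_apply, ite_mul]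

theorem eq_zero_of_mul_one_kronecker_single_eq [Semiring R] [Fintype l] [DecidableEq l]
    [Fintype p] [DecidableEq p] [DecidableEq n] [Nontrivial n] {T S : Matrix (l × n) (p × n) R}
    (h : ∀ u v, (T * (1 ⊗ₖ single u v 1 : Matrix (p × n) (p × n) R) : Matrix (l × n) (p × n) R) =
      (1 ⊗ₖ single u v 1 : Matrix (l × n) (l × n) R)ᵀ * S) :
    T = 0 ∧ S = 0 := by
  have entry (u v : n) (a : l) (b : n) (c : p) (d : n) :
      (T.submatrix id (Prod.mk c) * single u v (1 : R) : Matrix (l × n) n R) (a, b) d =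
        (single v u (1 : R) * S.submatrix (Prod.mk a) id : Matrix n (p × n) R) b (c, d) := by
    have := congrFun (congrFun (h u v) (a, b)) (c, d)
    rwa [mul_one_kronecker_apply, one_kronecker_transpose_mul_apply, transpose_single] at this
  constructor
  · ext ⟨a, b⟩ ⟨c, u⟩
    obtain ⟨d, hdb⟩ := exists_ne b
    simpa [hdb.symm] using entry u d a b c d
  · ext ⟨a, u⟩ ⟨c, d⟩
    obtain ⟨b, hbd⟩ := exists_ne d
    simpa [hbd.symm] using (entry u b a b c d).symm

end Matrix

namespace MvPolynomial

variable {σ l m n R : Type*} [CommSemiring R]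

theorem map_coeff_map_C_mul [Fintype m] (e : σ →₀ ℕ) (A : Matrix l m R)
    (P : Matrix m n (MvPolynomial σ R)) :
    (A.map (C : R → MvPolynomial σ R) * P).map (coeff e) = A * P.map (coeff e) := by
  ext i j
  simp only [Matrix.map_apply, mul_apply, coeff_sum, coeff_C_mul]

theorem map_coeff_mul_map_C [Fintype m] (e : σ →₀ ℕ) (P : Matrix l m (MvPolynomial σ R))
    (B : Matrix m n R) :
    (P * B.map (C : R → MvPolynomial σ R)).map (coeff e) = P.map (coeff e) * B := by
  ext i j
  simp only [Matrix.map_apply, mul_apply, coeff_sum, mul_comm (P _ _), coeff_C_mul,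
    mul_comm (B _ _)]

theorem map_coeff_one_kronecker {p : Type*} [DecidableEq p] (e : σ →₀ ℕ)
    (P : Matrix m n (MvPolynomial σ R)) :
    ((1 : Matrix p p (MvPolynomial σ R)) ⊗ₖ P).map (coeff e) = 1 ⊗ₖ P.map (coeff e) := by
  ext ⟨a, i⟩ ⟨b, j⟩
  simp [Matrix.one_apply, apply_ite (coeff e)]

theorem of_X_map_coeff_single [DecidableEq m] [DecidableEq n] [Nontrivial R] (u : m) (v : n) :
    (Matrix.of fun i j => (X (i, j) : MvPolynomial (m × n) R)).map
      (coeff (Finsupp.single (u, v) 1)) = Matrix.single u v 1 := by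
  ext i j
  simp [coeff_X, Matrix.single_apply, Finsupp.single_left_inj, eq_comm]

end MvPolynomial

theorem stmt0 (F : Type*) [Field F] (w : ℕ) (hw : 2 ≤ w)
    (Xm : Matrix (Fin w) (Fin w) (MvPolynomial (Fin w × Fin w) F))
    (hX : ∀ i j, Xm i j = MvPolynomial.X (i, j))
    (T S : Matrix (Fin w × Fin w) (Fin w × Fin w) F)
    (h : T.map MvPolynomial.C *
          ((1 : Matrix (Fin w) (Fin w) (MvPolynomial (Fin w × Fin w) F)) ⊗ₖ Xm) =
        ((1 : Matrix (Fin w) (Fin w) (MvPolynomial (Fin w × Fin w) F)) ⊗ₖ Xm)ᵀ *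
          S.map MvPolynomial.C) :
    T = 0 ∧ S = 0 := by
  have : Nontrivial (Fin w) := Fin.nontrivial_iff_two_le.mpr hw
  obtain rfl : Xm = Matrix.of fun i j => MvPolynomial.X (i, j) := Matrix.ext hX
  refine Matrix.eq_zero_of_mul_one_kronecker_single_eq fun u v => ?_
  have coeff_uv := congrArg (Matrix.map · (MvPolynomial.coeff (Finsupp.single (u, v) 1))) h
  simpa only [MvPolynomial.map_coeff_map_C_mul, MvPolynomial.map_coeff_mul_map_C, transpose_map,
    MvPolynomial.map_coeff_one_kronecker, MvPolynomial.of_X_map_coeff_single] using coeff_uv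
end

section
/- Let X be a w×w matrix whose entries are w² distinct indeterminates, and let Y = I_w ⊗ X. If T, S are w²×w² matrices over F with T·Y = Y·S, then T = S and there exists a w×w matrix M over F such that T = M ⊗ I_w. -/
open Matrix Kronecker

/-!
Compare the coefficients of the variable `X (p, q)` in the `((a, i), (b, j))` entries of both
sides of `T (I ⊗ X) = (I ⊗ X) S`: on the left it is `[j = q] T (a, i) (b, p)`, on the right
`[i = p] S (a, q) (b, j)`. Taking `i = p` shows `S = M ⊗ I`, where `M` is the block of `T` at a
fixed inner index `i₀`; taking `j = q` then shows `T = M ⊗ I` as well.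
-/

namespace Matrix

open MvPolynomial

variable {ι n R : Type*} [Fintype ι] [DecidableEq ι] [Fintype n] [DecidableEq n] [CommSemiring R]

variable (ι n R) in
noncomputable def oneKroneckerMvPolynomialX : Matrix (ι × n) (ι × n) (MvPolynomial (n × n) R) :=
  (1 : Matrix ι ι (MvPolynomial (n × n) R)) ⊗ₖ mvPolynomialX n n R

theorem coeff_map_C_mul_oneKroneckerMvPolynomialX_apply (T : Matrix (ι × n) (ι × n) R)
    (a b : ι) (i j p q : n) :
    coeff (Finsupp.single (p, q) 1)
      ((T.map C * oneKroneckerMvPolynomialX ι n R : Matrix _ _ _) (a, i) (b, j)) =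
      if j = q then T (a, i) (b, p) else 0 := by
  simp [oneKroneckerMvPolynomialX, mul_apply, one_apply, Fintype.sum_prod_type, coeff_sum,
    coeff_X, Finsupp.single_eq_single_iff, ite_and]

theorem coeff_oneKroneckerMvPolynomialX_mul_map_C_apply (S : Matrix (ι × n) (ι × n) R)
    (a b : ι) (i j p q : n) :
    coeff (Finsupp.single (p, q) 1)
      ((oneKroneckerMvPolynomialX ι n R * S.map C : Matrix _ _ _) (a, i) (b, j)) =
      if i = p then S (a, q) (b, j) else 0 := by
  simp [oneKroneckerMvPolynomialX, mul_apply, one_apply, Fintype.sum_prod_type, coeff_sum,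
    coeff_X, mul_comm (X _) (C _), Finsupp.single_eq_single_iff, ite_and]

section Intertwining

variable {T S : Matrix (ι × n) (ι × n) R}

theorem ite_apply_eq_ite_apply_of_map_C_mul_oneKroneckerMvPolynomialX_eq
    (hTS : T.map C * oneKroneckerMvPolynomialX ι n R = oneKroneckerMvPolynomialX ι n R * S.map C)
    (a b : ι) (i j p q : n) :
    (if j = q then T (a, i) (b, p) else 0) = if i = p then S (a, q) (b, j) else 0 := by
  rw [← coeff_map_C_mul_oneKroneckerMvPolynomialX_apply,
    ← coeff_oneKroneckerMvPolynomialX_mul_map_C_apply, hTS]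

theorem right_eq_kronecker_one_of_map_C_mul_oneKroneckerMvPolynomialX_eq
    (hTS : T.map C * oneKroneckerMvPolynomialX ι n R = oneKroneckerMvPolynomialX ι n R * S.map C)
    (i₀ : n) : S = T.submatrix (·, i₀) (·, i₀) ⊗ₖ 1 := by
  ext ⟨a, q⟩ ⟨b, j⟩
  have h := ite_apply_eq_ite_apply_of_map_C_mul_oneKroneckerMvPolynomialX_eq hTS a b i₀ j i₀ q
  rw [if_pos rfl] at h
  simp [one_apply, ← h, eq_comm]

theorem left_eq_kronecker_one_of_map_C_mul_oneKroneckerMvPolynomialX_eq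
    (hTS : T.map C * oneKroneckerMvPolynomialX ι n R = oneKroneckerMvPolynomialX ι n R * S.map C)
    (i₀ : n) : T = T.submatrix (·, i₀) (·, i₀) ⊗ₖ 1 := by
  ext ⟨a, i⟩ ⟨b, p⟩
  have h := ite_apply_eq_ite_apply_of_map_C_mul_oneKroneckerMvPolynomialX_eq hTS a b i i₀ p i₀
  rw [if_pos rfl, right_eq_kronecker_one_of_map_C_mul_oneKroneckerMvPolynomialX_eq hTS i₀] at h
  simpa [one_apply] using h

end Intertwining

end Matrix

theorem stmt1 (F : Type*) [Field F] (w : ℕ)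
    (Xm : Matrix (Fin w) (Fin w) (MvPolynomial (Fin w × Fin w) F))
    (hX : ∀ i j, Xm i j = MvPolynomial.X (i, j))
    (T S : Matrix (Fin w × Fin w) (Fin w × Fin w) F)
    (h : T.map MvPolynomial.C *
          ((1 : Matrix (Fin w) (Fin w) (MvPolynomial (Fin w × Fin w) F)) ⊗ₖ Xm) =
        ((1 : Matrix (Fin w) (Fin w) (MvPolynomial (Fin w × Fin w) F)) ⊗ₖ Xm) *
          S.map MvPolynomial.C) :
    T = S ∧ ∃ M : Matrix (Fin w) (Fin w) F,
      T = M ⊗ₖ (1 : Matrix (Fin w) (Fin w) F) := by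
  obtain rfl : Xm = mvPolynomialX (Fin w) (Fin w) F := Matrix.ext hX
  cases isEmpty_or_nonempty (Fin w) with
  | inl _ => exact ⟨Subsingleton.elim _ _, 0, Subsingleton.elim _ _⟩
  | inr hw =>
    obtain ⟨i₀⟩ := hw
    have hT := left_eq_kronecker_one_of_map_C_mul_oneKroneckerMvPolynomialX_eq h i₀
    have hS := right_eq_kronecker_one_of_map_C_mul_oneKroneckerMvPolynomialX_eq h i₀
    exact ⟨hT.trans hS.symm, _, hT⟩
end

section
/- Every matrix in the Lie algebra of the trace iterated matrix multiplication polynomial Tr-IMM_{w,d} is block-diagonal with respect to the partition of the n = w²d variables into the d groups x_0, ..., x_{d-1}: if E ∈ 𝔤_{Tr-IMM} and the row index of a nonzero entry of E corresponds to a variable in x_k while the column index corresponds to a variable in x_ℓ, then k = ℓ. -/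
open Matrix MvPolynomial

/-- The `k`-th symbolic matrix `Q_k` of `Tr-IMM_{w,d}`: its `(i,j)` entry is the
variable `x^{(k)}_{i,j}`. -/
noncomputable def symQ (F : Type*) [Field F] (w d : ℕ) (k : Fin d) :
    Matrix (Fin w) (Fin w) (MvPolynomial (Fin d × Fin w × Fin w) F) :=
  fun i j => MvPolynomial.X (k, i, j)

/-- The trace iterated matrix multiplication polynomial
`Tr-IMM_{w,d} = tr(Q_0 Q_1 ⋯ Q_{d-1})`. -/
noncomputable def trIMM (F : Type*) [Field F] (w d : ℕ) :
    MvPolynomial (Fin d × Fin w × Fin w) F :=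
  Matrix.trace (((List.finRange d).map (symQ F w d)).prod)

/-- The Lie algebra of a polynomial `f`. -/
def lieAlg {F : Type*} [Field F] {σ : Type*} [Fintype σ] [DecidableEq σ]
    (f : MvPolynomial σ F) : Set (Matrix σ σ F) :=
  {E | ∑ i : σ, ∑ j : σ, E i j • (MvPolynomial.X j * MvPolynomial.pderiv i f) = 0}

/-!
Expanding the trace, `Tr-IMM = ∑_p ∏_t x^{(t)}_{p t, p (t+1)}` over closed walks
`p : ℤ/d → [w]`: distinct multilinear monomials, each with exactly one variable in every layer.
Let `a`, `b` be variables in layers `k ≠ ℓ`. Choose a walk `q` using the edge `a` such that no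
walk agreeing with `q` outside layers `k, ℓ` uses the edge `b` (possible as `w ≥ 2`, `d ≥ 3`).
In `∑ E_ij x_j ∂_i Tr-IMM`, the monomial `x^q x_b / x_a` can only arise as `x_j ∂_i x^p`
with `p` agreeing with `q` outside layers `k, ℓ`; counting variables per layer and comparing
edges then forces `p = q` and `(i, j) = (a, b)`, so its coefficient is exactly `E_ab`.
-/

theorem Matrix.list_prod_ofFn_apply {R n : Type*} [CommSemiring R] [Fintype n] [DecidableEq n] :
    ∀ {m : ℕ} (A : Fin m → Matrix n n R) (i j : n),
    (List.ofFn A).prod i j = ∑ p : Fin (m + 1) → n,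
      if p 0 = i ∧ p (Fin.last m) = j then ∏ t, A t (p t.castSucc) (p t.succ) else 0
  | 0, A, i, j => by
    rw [← (Equiv.funUnique (Fin 1) n).symm.sum_comp]
    simp [one_apply, ite_and]
  | m + 1, A, i, j => by
    rw [List.ofFn_succ, List.prod_cons, mul_apply, ← (Fin.consEquiv fun _ => n).sum_comp,
      Fintype.sum_prod_type]
    simp only [list_prod_ofFn_apply, Finset.mul_sum, Fin.consEquiv_apply, Fin.cons_zero,
      ← Fin.succ_last, Fin.cons_succ, Fin.prod_univ_succ, Fin.castSucc_zero,
      ← Fin.succ_castSucc]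
    rw [Finset.sum_comm]
    simp only [mul_ite, mul_zero, ite_and]
    simp [Finset.sum_ite_eq', Finset.sum_ite_eq, eq_comm]

theorem Fin.snoc_self_zero_succ {α : Type*} {m : ℕ} (q : Fin (m + 1) → α) (t : Fin (m + 1)) :
    Fin.snoc (α := fun _ => α) q (q 0) t.succ = q (t + 1) := by
  induction t using Fin.lastCases with
  | last => simp [Fin.succ_last, Fin.last_add_one]
  | cast s => rw [Fin.succ_castSucc, Fin.snoc_castSucc, Fin.coeSucc_eq_succ]

theorem Matrix.trace_list_prod_ofFn {R n : Type*} [CommSemiring R] [Fintype n] [DecidableEq n]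
    {m : ℕ} (A : Fin (m + 1) → Matrix n n R) :
    (List.ofFn A).prod.trace = ∑ p : Fin (m + 1) → n, ∏ t, A t (p t) (p (t + 1)) := by
  simp only [trace, diag, list_prod_ofFn_apply]
  rw [Finset.sum_comm, ← (Fin.snocEquiv fun _ => n).sum_comp, Fintype.sum_prod_type_right]
  have snoc_zero (q : Fin (m + 1) → n) (x : n) : Fin.snoc (α := fun _ => n) q x 0 = q 0 :=
    Fin.snoc_castSucc (i := 0) ..
  simp only [ite_and, Finset.sum_ite_eq, Finset.mem_univ, if_true, Fin.snocEquiv_apply, snoc_zero,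
    Fin.snoc_last, Finset.sum_ite_eq', Fin.snoc_castSucc, Fin.snoc_self_zero_succ]

section Walk

variable {V : Type*} {d : ℕ} [NeZero d]

noncomputable def walkMonomial (p : Fin d → V) : Fin d × V × V →₀ ℕ :=
  ∑ t, Finsupp.single (t, p t, p (t + 1)) 1

theorem walkMonomial_apply [DecidableEq V] (p : Fin d → V) (t : Fin d) (u v : V) :
    walkMonomial p (t, u, v) = if p t = u ∧ p (t + 1) = v then 1 else 0 := by
  simp only [walkMonomial, Finsupp.finsetSum_apply, Finsupp.single_apply, Prod.mk.injEq, ite_and,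
    Finset.sum_ite_eq', Finset.mem_univ, if_true]

theorem mapDomain_fst_walkMonomial (p : Fin d → V) :
    (walkMonomial p).mapDomain Prod.fst = ∑ t, Finsupp.single t 1 := by
  simp [walkMonomial, Finsupp.mapDomain_finsetSum, Finsupp.mapDomain_single]

def EdgesAgreeOff (s : Set (Fin d)) (p q : Fin d → V) : Prop :=
  ∀ t ∉ s, p t = q t ∧ p (t + 1) = q (t + 1)

theorem edges_eq_of_walkMonomial_eq_on_layer {p q : Fin d → V} {t : Fin d}
    (h : ∀ u v, walkMonomial p (t, u, v) = walkMonomial q (t, u, v)) :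
    p t = q t ∧ p (t + 1) = q (t + 1) := by
  classical
  simpa [walkMonomial_apply] using h (q t) (q (t + 1))

theorem walkMonomial_injective : Function.Injective (walkMonomial : (Fin d → V) → _) :=
  fun _ _ h => funext fun _ => (edges_eq_of_walkMonomial_eq_on_layer fun u v => by rw [h]).1

theorem eq_of_edgesAgreeOff_singleton {p q : Fin d → V} {k : Fin d} (hd : (1 : Fin d) ≠ 0)
    (h : EdgesAgreeOff {k} p q) : p = q := by
  funext s
  by_cases hs : s = k
  · simpa using (h (s - 1) (by simpa [hs] using hd)).2
  · exact (h s hs).1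

theorem layers_eq_of_walkMonomial_add_single_add_single {p q : Fin d → V}
    {a b i j : Fin d × V × V} (hab : a.1 ≠ b.1)
    (h : walkMonomial p + Finsupp.single j 1 + Finsupp.single a 1 =
      walkMonomial q + Finsupp.single b 1 + Finsupp.single i 1) :
    j.1 = b.1 ∧ i.1 = a.1 := by
  have h := congrArg (Finsupp.mapDomain Prod.fst) h
  simp only [Finsupp.mapDomain_add, mapDomain_fst_walkMonomial, Finsupp.mapDomain_single,
    add_assoc, add_right_inj] at h
  rcases (Finsupp.single_add_single_eq_single_add_single one_ne_zero one_ne_zero).1 h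
    with h | h | h
  · exact ⟨h.1, h.2.symm⟩
  · exact absurd h.2.2 hab
  · simp at h

theorem eq_of_walkMonomial_add_single_add_single {p q : Fin d → V} {a b i j : Fin d × V × V}
    (hab : a.1 ≠ b.1) (hb : ∀ p', EdgesAgreeOff {a.1, b.1} p' q → walkMonomial p' b = 0)
    (h : walkMonomial p + Finsupp.single j 1 + Finsupp.single a 1 =
      walkMonomial q + Finsupp.single b 1 + Finsupp.single i 1) :
    i = a ∧ j = b := by
  classical
  obtain ⟨hj, hi⟩ := layers_eq_of_walkMonomial_add_single_add_single hab h
  have hx (x) := DFunLike.congr_fun h x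
  simp only [Finsupp.add_apply, Finsupp.single_apply] at hx
  have off : EdgesAgreeOff {a.1, b.1} p q := fun t ht =>
    edges_eq_of_walkMonomial_eq_on_layer fun u v => by
      have ne {y : Fin d × V × V} (hy : y.1 = a.1 ∨ y.1 = b.1) : y ≠ (t, u, v) := by
        rintro rfl; exact ht (by simpa using hy)
      simpa [ne (.inl rfl), ne (.inr rfl), ne (.inl hi), ne (.inr hj)] using hx (t, u, v)
  have hab' : a ≠ b := fun h => hab (congrArg Prod.fst h)
  obtain rfl : b = j := by
    have := hx b
    rw [hb p off, if_neg hab', if_pos rfl] at this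
    by_contra hjb
    rw [if_neg (Ne.symm hjb)] at this
    omega
  have layer_b : ∀ u v, walkMonomial p (b.1, u, v) = walkMonomial q (b.1, u, v) := fun u v => by
    have ne {y : Fin d × V × V} (hy : y.1 = a.1) : y ≠ (b.1, u, v) := by
      rintro rfl; exact hab hy.symm
    simpa [ne rfl, ne hi] using hx (b.1, u, v)
  have hd : (1 : Fin d) ≠ 0 := by
    have : 2 ≤ d := Fin.nontrivial_iff_two_le.mp ⟨⟨a.1, b.1, hab⟩⟩
    simp [Fin.ext_iff, Nat.mod_eq_of_lt (by omega : 1 < d)]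
  obtain rfl : p = q := eq_of_edgesAgreeOff_singleton (k := a.1) hd fun t ht => by
    by_cases htb : t = b.1
    · exact htb ▸ edges_eq_of_walkMonomial_eq_on_layer layer_b
    · exact off t (by simp_all)
  exact ⟨(Finsupp.single_left_injective one_ne_zero (add_left_cancel h)).symm, rfl⟩

theorem exists_walk_separating [Nontrivial V] (hd : 3 ≤ d)
    {a b : Fin d × V × V} (hab : a.1 ≠ b.1) :
    ∃ q : Fin d → V, walkMonomial q a = 1 ∧
      ∀ p, EdgesAgreeOff {a.1, b.1} p q → walkMonomial p b = 0 := by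
  classical
  obtain ⟨k, u, v⟩ := a
  obtain ⟨ℓ, u', v'⟩ := b
  have one : (1 : Fin d) ≠ 0 := by
    simp [Fin.ext_iff, Nat.mod_eq_of_lt (by omega : 1 < d)]
  have two : (1 + 1 : Fin d) ≠ 0 := by
    simp [Fin.ext_iff, Fin.val_add, Nat.mod_eq_of_lt (by omega : 1 < d),
      Nat.mod_eq_of_lt (by omega : 2 < d)]
  have h1 : k + 1 ≠ k := by rwa [Ne, add_eq_left]
  -- The endpoint of `b` outside `{k, k + 1}` is pinned to `y` by its other edge.
  obtain ⟨y, hy⟩ := exists_ne (if ℓ = k + 1 then v' else u')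
  let q t := if t = k then u else if t = k + 1 then v else y
  refine ⟨q, by simp [walkMonomial_apply, q, h1], fun p hp => ?_⟩
  rw [walkMonomial_apply, if_neg]
  by_cases hℓ : ℓ = k + 1
  · subst hℓ
    have h2 : k + 1 + 1 ≠ k := by rwa [add_assoc, Ne, add_eq_left]
    have h3 : k + 1 + 1 ≠ k + 1 := by rwa [Ne, add_eq_left]
    have hp2 : p (k + 1 + 1) = y := by
      simpa [q, h2, h3] using (hp (k + 1 + 1) (by simp [h2, h3])).1
    rw [if_pos rfl] at hy
    exact fun h => hy (hp2 ▸ h.2)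
  · have h2 : ℓ - 1 ≠ k := by rwa [Ne, sub_eq_iff_eq_add]
    have h3 : ℓ - 1 ≠ ℓ := by rwa [Ne, sub_eq_self]
    have hpℓ : p ℓ = y := by
      simpa [q, Ne.symm hab, hℓ] using (hp (ℓ - 1) (by simp [h2, h3])).2
    rw [if_neg hℓ] at hy
    exact fun h => hy (hpℓ ▸ h.1)

end Walk

section TrIMM

variable {F : Type*} [Field F] {w d : ℕ} [NeZero d]

theorem trIMM_eq_sum_monomial :
    trIMM F w d = ∑ p : Fin d → Fin w, monomial (walkMonomial p) 1 := by
  obtain ⟨m, rfl⟩ := Nat.exists_eq_succ_of_ne_zero (NeZero.ne d)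
  rw [trIMM, ← List.ofFn_eq_map, trace_list_prod_ofFn]
  refine Finset.sum_congr rfl fun p _ => ?_
  rw [walkMonomial, monomial_sum_one]
  rfl

theorem coeff_trIMM (ν : Fin d × Fin w × Fin w →₀ ℕ) :
    coeff ν (trIMM F w d) = if ∃ p, walkMonomial p = ν then 1 else 0 := by
  classical
  simp only [trIMM_eq_sum_monomial, coeff_sum, coeff_monomial]
  split_ifs with h
  · obtain ⟨p, rfl⟩ := h
    simp [walkMonomial_injective.eq_iff]
  · exact Finset.sum_eq_zero fun p _ => if_neg fun hp => h ⟨p, hp⟩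

theorem lieAlg_trIMM_apply_eq_zero
    {E : Matrix (Fin d × Fin w × Fin w) (Fin d × Fin w × Fin w) F}
    (hE : E ∈ lieAlg (trIMM F w d)) {a b : Fin d × Fin w × Fin w} (hab : a.1 ≠ b.1)
    {q : Fin d → Fin w} (hqa : walkMonomial q a = 1)
    (hqb : ∀ p, EdgesAgreeOff {a.1, b.1} p q → walkMonomial p b = 0) :
    E a b = 0 := by
  classical
  set μ := walkMonomial q - Finsupp.single a 1 + Finsupp.single b 1
  have hqa' : Finsupp.single a 1 ≤ walkMonomial q := Finsupp.single_le_iff.2 hqa.ge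
  have hμ := congrArg (coeff μ) (show _ = _ from hE)
  simp only [coeff_sum, coeff_smul, coeff_zero, smul_eq_mul, coeff_X_mul', coeff_pderiv,
    coeff_trIMM] at hμ
  rw [← Fintype.sum_prod_type', Fintype.sum_eq_single (a, b)] at hμ
  · have hb : b ∈ μ.support := by simp [μ]
    have hμb : μ - Finsupp.single b 1 = walkMonomial q - Finsupp.single a 1 :=
      add_tsub_cancel_right _ _
    simpa [hb, hμb, tsub_add_cancel_of_le hqa', hqa] using hμ
  · rintro ⟨i, j⟩ hij
    suffices ¬ (j ∈ μ.support ∧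
        ∃ p, walkMonomial p = μ - Finsupp.single j 1 + Finsupp.single i 1) by
      simp only
      split_ifs <;> simp_all
    rintro ⟨hj, p, hp⟩
    have hjμ : Finsupp.single j 1 ≤ μ :=
      Finsupp.single_le_iff.2 (Nat.one_le_iff_ne_zero.2 (Finsupp.mem_support_iff.1 hj))
    have key : walkMonomial p + Finsupp.single j 1 + Finsupp.single a 1 =
        walkMonomial q + Finsupp.single b 1 + Finsupp.single i 1 := calc
      walkMonomial p + Finsupp.single j 1 + Finsupp.single a 1
        = μ + Finsupp.single i 1 + Finsupp.single a 1 := by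
          rw [hp, add_right_comm _ (Finsupp.single i 1), tsub_add_cancel_of_le hjμ]
      _ = walkMonomial q - Finsupp.single a 1 + Finsupp.single a 1 + Finsupp.single b 1 +
          Finsupp.single i 1 := by
          simp only [μ]; ac_rfl
      _ = walkMonomial q + Finsupp.single b 1 + Finsupp.single i 1 := by
          rw [tsub_add_cancel_of_le hqa']
    obtain ⟨rfl, rfl⟩ := eq_of_walkMonomial_add_single_add_single hab hqb key
    exact hij rfl

end TrIMM

theorem stmt6_general (F : Type*) [Field F] (w d : ℕ) (hw : 2 ≤ w) (hd : 3 ≤ d)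
    (E : Matrix (Fin d × Fin w × Fin w) (Fin d × Fin w × Fin w) F)
    (hE : E ∈ lieAlg (trIMM F w d)) :
    ∀ a b : Fin d × Fin w × Fin w, E a b ≠ 0 → a.1 = b.1 := by
  intro a b hab
  by_contra hne
  have : NeZero d := ⟨by omega⟩
  have : Nontrivial (Fin w) := Fin.nontrivial_iff_two_le.2 hw
  obtain ⟨q, hqa, hqb⟩ := exists_walk_separating hd hne
  exact hab (lieAlg_trIMM_apply_eq_zero hE hne hqa hqb)

theorem stmt6 (F : Type*) [Field F] [CharZero F] (w d : ℕ) (hw : 2 ≤ w) (hd : 3 ≤ d)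
    (E : Matrix (Fin d × Fin w × Fin w) (Fin d × Fin w × Fin w) F)
    (hE : E ∈ lieAlg (trIMM F w d)) :
    ∀ a b : Fin d × Fin w × Fin w, E a b ≠ 0 → a.1 = b.1 :=
  stmt6_general F w d hw hd E hE
end

section
/- For each k, with d even and k even, the space B_k of block-diagonal matrices whose nonzero entries lie in the rows/columns indexed by x_k and x_{k+1} and whose corresponding 2w²×2w² submatrix equals diag(I_w ⊗ Mᵀ, −I_w ⊗ M) for some M ∈ M_w(F), is contained in the Lie algebra 𝔤_{Tr-IMM} of Tr-IMM_{w,d}. -/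
/-!
The Lie algebra condition `E ∈ 𝔤_f` says that the derivation `D = ∑ᵢ (E x)ᵢ ∂ᵢ` of the linear
vector field `x ↦ E x` kills `f`. For `E = Bmat k M`, `D` acts on the symbolic matrices by
`Q_k ↦ Q_k M`, `Q_{k+1} ↦ -M Q_{k+1}` and kills every other `Q_m`. Rotating the cyclic product,
`Tr-IMM = tr(Q_k Q_{k+1} R)` with `D R = 0`, so the Leibniz rule gives
`D(Tr-IMM) = tr(Q_k M Q_{k+1} R) - tr(Q_k M Q_{k+1} R) = 0`.
-/

open Matrix MvPolynomial

/-- The block-diagonal matrix of the space `B_k` associated to `M ∈ M_w(F)`.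
Its nonzero entries are confined to the rows/columns indexed by the `x_k` and
`x_{k+1}` variables; under the paper's variable ordering (row-major for even `k`,
column-major for odd `k`) the corresponding `2w² × 2w²` submatrix is
`diag(I_w ⊗ Mᵀ, −I_w ⊗ M)` (for even `k` with `d` even).  In coordinates,
the row indexed by `x^{(k)}_{i,j}` carries the linear form `(Q_k · M)_{i,j}` and the
row indexed by `x^{(k+1)}_{i,j}` carries `(−M · Q_{k+1})_{i,j}`. -/
def Bmat (F : Type*) [Field F] (w d : ℕ) [NeZero d] (k : Fin d)
    (M : Matrix (Fin w) (Fin w) F) :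
    Matrix (Fin d × Fin w × Fin w) (Fin d × Fin w × Fin w) F :=
  fun a b =>
    if a.1 = k ∧ b.1 = k then (if a.2.1 = b.2.1 then M b.2.2 a.2.2 else 0)
    else if a.1 = k + 1 ∧ b.1 = k + 1 then
      (if a.2.2 = b.2.2 then - M a.2.1 b.2.1 else 0)
    else 0

namespace Matrix

variable {n R : Type*} [Fintype n] [CommRing R]

theorem trace_list_prod_rotate [DecidableEq n] (l : List (Matrix n n R)) (k : ℕ) :
    trace (l.rotate k).prod = trace l.prod := by
  rw [List.rotate_eq_drop_append_take_mod, List.prod_append, trace_mul_comm, ← List.prod_append,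
    List.take_append_drop]

variable {S : Type*} [CommRing S] [Algebra S R] (D : Derivation S R R)

theorem map_derivation_mul (A B : Matrix n n R) :
    (A * B).map D = A.map D * B + A * B.map D := by
  ext i j
  simp only [map_apply, mul_apply, map_sum, Derivation.leibniz, smul_eq_mul, add_apply,
    ← Finset.sum_add_distrib]
  exact Finset.sum_congr rfl fun _ _ => by ring

theorem map_derivation_list_prod_eq_zero [DecidableEq n] (l : List (Matrix n n R))
    (hl : ∀ A ∈ l, A.map D = 0) : l.prod.map D = 0 :=
  List.prod_induction (fun A : Matrix n n R => A.map D = 0)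
    (fun A B hA hB => by rw [map_derivation_mul, hA, hB, Matrix.zero_mul, Matrix.mul_zero,
      add_zero])
    (by ext i j; by_cases h : i = j <;> simp [h]) hl

end Matrix

theorem List.exists_finRange_rotate_eq_cons_cons {d : ℕ} [NeZero d] (hd : 2 ≤ d) (k : Fin d) :
    ∃ l, (List.finRange d).rotate k = k :: (k + 1) :: l := by
  set r := (List.finRange d).rotate k with hr
  have hlen : r.length = d := by simp [hr]
  have hget (i : ℕ) (hi : i < d) : r[i] = ⟨i, hi⟩ + k := by
    ext
    simp [hr, List.getElem_rotate, Fin.val_add]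
  refine ⟨r.drop 2, ?_⟩
  conv_lhs => rw [← List.drop_zero (l := r), List.drop_eq_getElem_cons (by omega),
    List.drop_eq_getElem_cons (by omega), hget _ (by omega), hget _ (by omega)]
  congr 2 <;> ext <;> simp [Fin.val_add, Nat.mod_eq_of_lt (show 1 < d by omega),
    add_comm]

theorem Derivation.coe_finset_sum {R A M ι : Type*} [CommSemiring R] [CommSemiring A]
    [Algebra R A] [AddCommMonoid M] [Module A M] [Module R M] (s : Finset ι)
    (D : ι → Derivation R A M) : ⇑(∑ i ∈ s, D i) = ∑ i ∈ s, ⇑(D i) :=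
  map_sum coeFnAddMonoidHom D s

namespace MvPolynomial

variable {R σ : Type*} [CommRing R] [Fintype σ]

theorem mkDerivation_eq_sum_smul_pderiv [DecidableEq σ] (g : σ → MvPolynomial σ R) :
    mkDerivation R g = ∑ i, g i • pderiv i :=
  derivation_ext fun a => by simp [Derivation.coe_finset_sum, pderiv_X, Pi.single_apply]

noncomputable def linearDerivation (E : Matrix σ σ R) :
    Derivation R (MvPolynomial σ R) (MvPolynomial σ R) :=
  mkDerivation R fun a => ∑ b, E a b • X b

theorem linearDerivation_X (E : Matrix σ σ R) (a : σ) :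
    linearDerivation E (X a) = ∑ b, E a b • X b :=
  mkDerivation_X R _ a

end MvPolynomial

theorem mem_lieAlg_iff_linearDerivation {F σ : Type*} [Field F] [Fintype σ] [DecidableEq σ]
    (E : Matrix σ σ F) (f : MvPolynomial σ F) :
    E ∈ lieAlg f ↔ linearDerivation E f = 0 := by
  simp [lieAlg, linearDerivation, mkDerivation_eq_sum_smul_pderiv, Derivation.coe_finset_sum,
    Finset.sum_mul]

section Bmat

variable (F : Type*) [Field F] (w d : ℕ) [NeZero d] (k : Fin d) (M : Matrix (Fin w) (Fin w) F)

theorem symQ_map_linearDerivation_Bmat_self (hk : k ≠ k + 1) :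
    (symQ F w d k).map (linearDerivation (Bmat F w d k M)) = symQ F w d k * M.map C := by
  refine Matrix.ext fun i j => ?_
  simp [symQ, linearDerivation_X, Bmat, Matrix.mul_apply, Fintype.sum_prod_type, smul_eq_C_mul,
    mul_comm, hk]

theorem symQ_map_linearDerivation_Bmat_add_one (hk : k ≠ k + 1) :
    (symQ F w d (k + 1)).map (linearDerivation (Bmat F w d k M)) =
      -(M.map C * symQ F w d (k + 1)) := by
  refine Matrix.ext fun i j => ?_
  simp [symQ, linearDerivation_X, Bmat, Matrix.mul_apply, Fintype.sum_prod_type, smul_eq_C_mul,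
    hk.symm]

theorem symQ_map_linearDerivation_Bmat_of_ne {m : Fin d} (hk : m ≠ k) (hk1 : m ≠ k + 1) :
    (symQ F w d m).map (linearDerivation (Bmat F w d k M)) = 0 := by
  refine Matrix.ext fun i j => ?_
  simp [symQ, linearDerivation_X, Bmat, hk, hk1]

end Bmat

theorem stmt7_general (F : Type*) [Field F] (w d : ℕ) [NeZero d]
    (hd : 3 ≤ d) (k : Fin d) (M : Matrix (Fin w) (Fin w) F) :
    Bmat F w d k M ∈ lieAlg (trIMM F w d) := by
  obtain ⟨l, hrot⟩ := List.exists_finRange_rotate_eq_cons_cons (by omega) k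
  have hnodup : (k :: (k + 1) :: l).Nodup := hrot ▸ List.nodup_rotate.2 (List.nodup_finRange d)
  simp only [List.nodup_cons, List.mem_cons, not_or] at hnodup
  obtain ⟨⟨hk, hkl⟩, hk1l, -⟩ := hnodup
  have hrest : (l.map (symQ F w d)).prod.map (linearDerivation (Bmat F w d k M)) = 0 :=
    Matrix.map_derivation_list_prod_eq_zero _ _ fun A hA => by
      obtain ⟨m, hm, rfl⟩ := List.mem_map.1 hA
      exact symQ_map_linearDerivation_Bmat_of_ne F w d k M (ne_of_mem_of_not_mem hm hkl)
        (ne_of_mem_of_not_mem hm hk1l)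
  rw [mem_lieAlg_iff_linearDerivation, trIMM, ← Matrix.trace_list_prod_rotate _ k, ← List.map_rotate, hrot,
    AddMonoidHom.map_trace]
  simp only [List.map_cons, List.prod_cons, Matrix.map_derivation_mul, hrest,
    symQ_map_linearDerivation_Bmat_self F w d k M hk,
    symQ_map_linearDerivation_Bmat_add_one F w d k M hk]
  simp [Matrix.mul_assoc]

theorem stmt7 (F : Type*) [Field F] (w d : ℕ) [NeZero d]
    (hw : 2 ≤ w) (hd : 3 ≤ d) (hdeven : Even d)
    (k : Fin d) (hk : Even (k : ℕ)) (M : Matrix (Fin w) (Fin w) F) :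
    Bmat F w d k M ∈ lieAlg (trIMM F w d) :=
  stmt7_general F w d hd k M
end

section
/- Suppose Q'_k and Q_k are w×w symbolic matrices with distinct variable entries (Q'_k having entries that are linear forms in the variables of Q_k, and Q'_{k+1} having entries that are linear forms in the variables of Q_{k+1}), and Q'_k·Q_{k+1} + Q_k·Q'_{k+1} = 0. Then there exists a w×w scalar matrix M such that Q'_k = Q_k·M and Q'_{k+1} = −M·Q_{k+1}. -/
open Matrix MvPolynomial

/-!
Write `L_A(Y)` for the matrix `Q'_k` evaluated at a scalar matrix `Y`, and likewise `L_B`.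
Evaluating the identity at scalar matrices gives `L_A(Y₀) Y₁ + Y₀ L_B(Y₁) = 0` for all `Y₀, Y₁`.
Taking `Y₁ = 1` gives `L_A(Y) = Y M` with `M = -L_B(1)`, and then `Y₀ = 1` gives `L_B(Y) = -M Y`.
A matrix of linear forms is determined by its values at the matrix units, so this lifts back
to `Q'_k = Q_k M` and `Q'_{k+1} = -M Q_{k+1}`.
-/

namespace LinearMatrix

variable {R κ n : Type*} [CommRing R]

section Scalar

variable [Fintype n] [DecidableEq n]

def applyCoeffs (A : n → n → n → n → R) (Y : Matrix n n R) : Matrix n n R :=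
  of fun i j => ∑ p, ∑ q, A i j p q * Y p q

def rightMulCoeffs (M : Matrix n n R) : n → n → n → n → R :=
  fun i j p q => if p = i then M q j else 0

def leftMulCoeffs (M : Matrix n n R) : n → n → n → n → R :=
  fun i j p q => if q = j then M i p else 0

theorem applyCoeffs_single (A : n → n → n → n → R) (p q : n) :
    applyCoeffs A (single p q 1) = of fun i j => A i j p q := by
  ext i j
  simp [applyCoeffs, single_apply, ite_and]

theorem coeffs_eq_of_applyCoeffs_eq {A A' : n → n → n → n → R}
    (h : ∀ Y, applyCoeffs A Y = applyCoeffs A' Y) : A = A' := by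
  funext i j p q
  simpa [applyCoeffs_single] using congrFun (congrFun (h (single p q 1)) i) j

theorem applyCoeffs_rightMulCoeffs (M Y : Matrix n n R) :
    applyCoeffs (rightMulCoeffs M) Y = Y * M := by
  ext i j
  simp [applyCoeffs, rightMulCoeffs, mul_apply, mul_comm]

theorem applyCoeffs_leftMulCoeffs (M Y : Matrix n n R) :
    applyCoeffs (leftMulCoeffs M) Y = M * Y := by
  ext i j
  rw [applyCoeffs, of_apply, Finset.sum_comm]
  simp [leftMulCoeffs, mul_apply]

theorem exists_applyCoeffs_eq_mul_of_mul_add_mul_eq_zero {A B : n → n → n → n → R}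
    (h : ∀ Y₀ Y₁, applyCoeffs A Y₀ * Y₁ + Y₀ * applyCoeffs B Y₁ = 0) :
    ∃ M, (∀ Y, applyCoeffs A Y = Y * M) ∧ ∀ Y, applyCoeffs B Y = -M * Y := by
  set M := -applyCoeffs B 1
  have hA : ∀ Y, applyCoeffs A Y = Y * M := fun Y => by
    simpa [M, mul_neg, add_eq_zero_iff_eq_neg] using h Y 1
  refine ⟨M, hA, fun Y => ?_⟩
  have hY := h 1 Y
  rw [hA, one_mul, one_mul] at hY
  rw [neg_mul, eq_neg_iff_add_eq_zero, add_comm, hY]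

end Scalar

noncomputable def genericMatrix (c : κ) : Matrix n n (MvPolynomial (κ × n × n) R) :=
  of fun i j => X (c, i, j)

def stackPoint (Y : κ → Matrix n n R) : κ × n × n → R :=
  fun v => Y v.1 v.2.1 v.2.2

theorem map_eval_genericMatrix (Y : κ → Matrix n n R) (c : κ) :
    (genericMatrix c).map (eval (stackPoint Y)) = Y c := by
  ext i j
  simp [genericMatrix, stackPoint]

variable [Fintype n]

noncomputable def linearMatrix (c : κ) (A : n → n → n → n → R) :
    Matrix n n (MvPolynomial (κ × n × n) R) :=
  of fun i j => ∑ p, ∑ q, A i j p q • X (c, p, q)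

theorem map_eval_linearMatrix (Y : κ → Matrix n n R) (c : κ) (A : n → n → n → n → R) :
    (linearMatrix c A).map (eval (stackPoint Y)) = applyCoeffs A (Y c) := by
  ext i j
  simp [linearMatrix, applyCoeffs, stackPoint, smul_eq_C_mul]

variable [DecidableEq n]

theorem genericMatrix_mul_map_C (c : κ) (M : Matrix n n R) :
    genericMatrix c * M.map C = linearMatrix c (rightMulCoeffs M) := by
  ext i j
  simp [genericMatrix, linearMatrix, rightMulCoeffs, mul_apply, smul_eq_C_mul, mul_comm]

theorem map_C_mul_genericMatrix (c : κ) (M : Matrix n n R) :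
    M.map C * genericMatrix c = linearMatrix c (leftMulCoeffs M) := by
  ext i j
  rw [linearMatrix, of_apply, Finset.sum_comm]
  simp [genericMatrix, leftMulCoeffs, mul_apply, smul_eq_C_mul]

end LinearMatrix

open LinearMatrix

theorem stmt9 (F : Type*) [Field F] (w : ℕ)
    (Q0 Q1 : Matrix (Fin w) (Fin w) (MvPolynomial (Fin 2 × Fin w × Fin w) F))
    (hQ0 : ∀ i j, Q0 i j = MvPolynomial.X (0, i, j))
    (hQ1 : ∀ i j, Q1 i j = MvPolynomial.X (1, i, j))
    (Q0' Q1' : Matrix (Fin w) (Fin w) (MvPolynomial (Fin 2 × Fin w × Fin w) F))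
    (A B : Fin w → Fin w → Fin w → Fin w → F)
    (hQ0' : ∀ i j, Q0' i j =
      ∑ p, ∑ q, A i j p q • MvPolynomial.X (((0 : Fin 2), p, q) : Fin 2 × Fin w × Fin w))
    (hQ1' : ∀ i j, Q1' i j =
      ∑ p, ∑ q, B i j p q • MvPolynomial.X (((1 : Fin 2), p, q) : Fin 2 × Fin w × Fin w))
    (h : Q0' * Q1 + Q0 * Q1' = 0) :
    ∃ M : Matrix (Fin w) (Fin w) F,
      Q0' = Q0 * M.map MvPolynomial.C ∧ Q1' = -(M.map MvPolynomial.C * Q1) := by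
  obtain rfl : Q0 = genericMatrix 0 := ext hQ0
  obtain rfl : Q1 = genericMatrix 1 := ext hQ1
  obtain rfl : Q0' = linearMatrix 0 A := ext hQ0'
  obtain rfl : Q1' = linearMatrix 1 B := ext hQ1'
  have hscalar : ∀ Y₀ Y₁, applyCoeffs A Y₀ * Y₁ + Y₀ * applyCoeffs B Y₁ = 0 := fun Y₀ Y₁ => by
    simpa only [map_add, _root_.map_mul, map_zero, RingHom.mapMatrix_apply, map_eval_genericMatrix,
      map_eval_linearMatrix, cons_val_zero, cons_val_one, cons_val_fin_one] using
      congrArg (eval (stackPoint ![Y₀, Y₁])).mapMatrix h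
  obtain ⟨M, hA, hB⟩ := exists_applyCoeffs_eq_mul_of_mul_add_mul_eq_zero hscalar
  refine ⟨M, ?_, ?_⟩
  · rw [genericMatrix_mul_map_C]
    congr 1
    exact coeffs_eq_of_applyCoeffs_eq fun Y => by rw [hA, applyCoeffs_rightMulCoeffs]
  · rw [← neg_mul, ← Matrix.map_neg _ (map_neg C), map_C_mul_genericMatrix]
    congr 1
    exact coeffs_eq_of_applyCoeffs_eq fun Y => by rw [hB, applyCoeffs_leftMulCoeffs]
end

section
/- There exists a diagonal matrix in the Lie algebra 𝔤_{Tr-IMM_{w,d}} all of whose n = w²d diagonal entries are pairwise distinct, provided the field F is large enough (|F| > n³ suffices). -/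
/-!
A diagonal matrix `diagonal c` lies in `𝔤_f` exactly when the weighted Euler derivation
`D_c = ∑ₐ cₐ xₐ ∂ₐ` kills `f`. Take `c(x⁽ᵏ⁾ᵢⱼ) = t(k+1, j) - t(k, i)` and `Tₖ = diagonal (t(k, ·))`.
Applied entrywise, `D_c Qₖ = Qₖ Tₖ₊₁ - Tₖ Qₖ`, so by the Leibniz rule `D_c (Q₀ ⋯ Q_{d-1})`
telescopes to `P T_d - T₀ P = P T₀ - T₀ P`, which has trace zero.

The entries `c` are values at `t` of the linear forms `X(k+1, j) - X(k, i)`, which are pairwise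
distinct once `d ≥ 3`. The product of their pairwise differences is a nonzero homogeneous polynomial
of degree below `n² ≤ |F|`, so it does not vanish at some `t`.
-/

open Matrix MvPolynomial

theorem apply_prod_ofFn_of_leibniz {R : Type*} [Ring R] (δ : R → R)
    (hδ : ∀ x y, δ (x * y) = δ x * y + x * δ y) (T : ℕ → R) {m : ℕ} (Q : Fin m → R)
    (hQ : ∀ k : Fin m, δ (Q k) = Q k * T (k + 1) - T k * Q k) :
    δ (List.ofFn Q).prod = (List.ofFn Q).prod * T m - T 0 * (List.ofFn Q).prod := by
  induction m generalizing T with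
  | zero =>
    have hδ_one : δ 1 = 0 := by simpa using hδ 1 1
    simp [hδ_one]
  | succ m ih =>
    rw [List.ofFn_succ, List.prod_cons, hδ, hQ 0,
      ih (fun n => T (n + 1)) (fun k => Q k.succ) fun k => by simpa using hQ k.succ]
    simp only [Fin.val_zero, zero_add]
    noncomm_ring

theorem Derivation.map_matrix_mul {R A l m n : Type*} [CommSemiring R] [CommSemiring A]
    [Algebra R A] [Fintype m] (D : Derivation R A A) (M : Matrix l m A) (N : Matrix m n A) :
    (M * N).map D = M.map D * N + M * N.map D := by
  ext i j
  rw [Matrix.add_apply, map_apply, mul_apply, mul_apply, mul_apply, ← Finset.sum_add_distrib]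
  simp only [map_apply, map_sum, Derivation.leibniz, smul_eq_mul]
  exact Finset.sum_congr rfl fun _ _ => by ring

section Euler

variable {σ R : Type*} [CommSemiring R]

noncomputable def eulerDerivation (c : σ → R) :
    Derivation R (MvPolynomial σ R) (MvPolynomial σ R) :=
  mkDerivation R fun a => c a • X a

theorem eulerDerivation_X (c : σ → R) (a : σ) : eulerDerivation c (X a) = c a • X a :=
  mkDerivation_X R _ a

theorem eulerDerivation_apply [Fintype σ] [DecidableEq σ] (c : σ → R) (f : MvPolynomial σ R) :
    eulerDerivation c f = ∑ a, c a • (X a * pderiv a f) := by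
  let E : Derivation R (MvPolynomial σ R) (MvPolynomial σ R) :=
    ∑ a, (c a • X a : MvPolynomial σ R) • pderiv a
  have hE : ∀ g, E g = ∑ a, c a • (X a * pderiv a g) := fun g => by
    rw [← Derivation.coeFnAddMonoidHom_apply E, map_sum, Finset.sum_apply]
    simp
  have : eulerDerivation c = E :=
    derivation_ext fun b => by simp [hE, eulerDerivation_X, pderiv_X, Pi.single_apply]
  rw [this, hE]

end Euler

theorem diagonal_mem_lieAlg_iff {F σ : Type*} [Field F] [Fintype σ] [DecidableEq σ]
    (c : σ → F) (f : MvPolynomial σ F) :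
    diagonal c ∈ lieAlg f ↔ eulerDerivation c f = 0 := by
  simp [lieAlg, eulerDerivation_apply, diagonal_apply, ite_smul]

theorem X_add_X_eq_X_add_X_iff {R σ : Type*} [CommSemiring R] [Nontrivial R] {a b c d : σ} :
    (X a + X b : MvPolynomial σ R) = X c + X d ↔
      a = c ∧ b = d ∨ a = d ∧ b = c ∨ (1 + 1 : R) = 0 ∧ a = b ∧ c = d := by
  simp only [X, ← single_eq_monomial]
  rw [AddMonoidAlgebra.single_add_single_inj one_ne_zero one_ne_zero]
  simp [Finsupp.single_left_inj]

theorem exists_eval_injective_of_isHomogeneous {R σ ι : Type*} [CommRing R] [IsDomain R]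
    [Fintype ι] (p : ι → MvPolynomial σ R) {m : ℕ} (hp : ∀ a, (p a).IsHomogeneous m)
    (hinj : Function.Injective p)
    (hR : ((m * Fintype.card ι ^ 2 : ℕ) : Cardinal) ≤ Cardinal.mk R) :
    ∃ r : σ → R, Function.Injective fun a => eval r (p a) := by
  classical
  set P := ∏ ab ∈ (Finset.univ : Finset ι).offDiag, (p ab.1 - p ab.2)
  have hP : P ≠ 0 := Finset.prod_ne_zero_iff.mpr fun ab hab =>
    sub_ne_zero.mpr (hinj.ne (Finset.mem_offDiag.mp hab).2.2)
  have hhom : P.IsHomogeneous (∑ _ ∈ (Finset.univ : Finset ι).offDiag, m) :=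
    IsHomogeneous.prod _ _ _ fun ab _ => (hp ab.1).sub (hp ab.2)
  have hdeg : ∑ _ ∈ (Finset.univ : Finset ι).offDiag, m ≤ m * Fintype.card ι ^ 2 := by
    rw [Finset.sum_const, smul_eq_mul, mul_comm, Finset.offDiag_card, Finset.card_univ, sq]
    exact Nat.mul_le_mul_left m (Nat.sub_le _ _)
  obtain ⟨r, hr⟩ : ∃ r, eval r P ≠ 0 := by
    by_contra! h
    exact hP (hhom.eq_zero_of_forall_eval_eq_zero_of_le_card h
      ((Nat.cast_le.mpr hdeg).trans hR))
  refine ⟨r, fun a b hab => by_contra fun hne => hr ?_⟩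
  rw [map_prod]
  exact Finset.prod_eq_zero (i := (a, b))
    (Finset.mem_offDiag.mpr ⟨Finset.mem_univ a, Finset.mem_univ b, hne⟩)
    (by simpa [sub_eq_zero] using hab)

section TrIMM

open Fin.NatCast

variable {F : Type*} [Field F] {w d : ℕ} [NeZero d]

/-- `t (k, i)` plays the role of `d_i^{(k-1)}`, read cyclically in `k`. -/
def trIMMWeight (t : Fin d × Fin w → F) : Fin d × Fin w × Fin w → F :=
  fun a => t (a.1 + 1, a.2.2) - t (a.1, a.2.1)

theorem map_eulerDerivation_symQ (t : Fin d × Fin w → F) (k : Fin d) :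
    (symQ F w d k).map (eulerDerivation (trIMMWeight t)) =
      symQ F w d k * diagonal (fun j => C (t (k + 1, j))) -
        diagonal (fun i => C (t (k, i))) * symQ F w d k := by
  ext i j
  simp [symQ, eulerDerivation_X, trIMMWeight, smul_eq_C_mul, mul_sub, mul_comm]

theorem eulerDerivation_trIMM (t : Fin d × Fin w → F) :
    eulerDerivation (trIMMWeight t) (trIMM F w d) = 0 := by
  set D := eulerDerivation (trIMMWeight t)
  let T : ℕ → Matrix (Fin w) (Fin w) (MvPolynomial (Fin d × Fin w × Fin w) F) :=
    fun n => diagonal fun i => C (t ((n : Fin d), i))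
  have hprod := apply_prod_ofFn_of_leibniz (fun M => M.map D) D.map_matrix_mul T (symQ F w d)
    fun k => by simpa [T] using map_eulerDerivation_symQ t k
  have hT : T d = T 0 := by simp [T]
  rw [trIMM, ← List.ofFn_eq_map, AddMonoidHom.map_trace D, hprod, hT, trace_sub, trace_mul_comm,
    sub_self]

theorem injective_X_add_one_sub_X (hd : 3 ≤ d) :
    Function.Injective fun a : Fin d × Fin w × Fin w =>
      (X (a.1 + 1, a.2.2) - X (a.1, a.2.1) : MvPolynomial (Fin d × Fin w) F) := by
  have hsucc_ne : ∀ k : Fin d, k + 1 ≠ k := fun k => by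
    rw [Ne, add_eq_left, Fin.ext_iff]
    simp
    omega
  have hsucc_succ_ne : ∀ k : Fin d, k + 1 + 1 ≠ k := fun k => by
    rw [add_assoc, Ne, add_eq_left, Fin.ext_iff]
    simp [Fin.val_add, Nat.mod_eq_of_lt (show 2 < d by omega)]
  rintro ⟨k, i, j⟩ ⟨k', i', j'⟩ h
  rw [sub_eq_sub_iff_add_eq_add, X_add_X_eq_X_add_X_iff] at h
  simp only [Prod.mk.injEq] at h
  rcases h with ⟨⟨-, rfl⟩, rfl, rfl⟩ | ⟨⟨hk, -⟩, -⟩ | ⟨-, ⟨hk, -⟩, hk', -⟩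
  · rfl
  · exact absurd hk (hsucc_ne k)
  · exact absurd (by rw [hk, hk']) (hsucc_succ_ne k)

theorem exists_trIMMWeight_injective (hd : 3 ≤ d)
    (hF : (((w ^ 2 * d) ^ 2 : ℕ) : Cardinal) ≤ Cardinal.mk F) :
    ∃ t : Fin d × Fin w → F, Function.Injective (trIMMWeight t) := by
  have hcard : 1 * Fintype.card (Fin d × Fin w × Fin w) ^ 2 = (w ^ 2 * d) ^ 2 := by
    simp only [Fintype.card_prod, Fintype.card_fin]
    ring
  obtain ⟨t, ht⟩ := exists_eval_injective_of_isHomogeneous _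
    (fun _ => (isHomogeneous_X F _).sub (isHomogeneous_X F _)) (injective_X_add_one_sub_X hd)
    (hcard ▸ hF)
  simp only [map_sub, eval_X] at ht
  exact ⟨t, ht⟩

end TrIMM

theorem stmt10_general (F : Type*) [Field F] (w d : ℕ) (hd : 3 ≤ d)
    (hF : (((w ^ 2 * d) ^ 3 : ℕ) : Cardinal) < Cardinal.mk F) :
    ∃ E ∈ lieAlg (trIMM F w d),
      (∀ a b : Fin d × Fin w × Fin w, a ≠ b → E a b = 0) ∧
      (∀ a b : Fin d × Fin w × Fin w, a ≠ b → E a a ≠ E b b) := by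
  have : NeZero d := ⟨by omega⟩
  have hsq : (w ^ 2 * d) ^ 2 ≤ (w ^ 2 * d) ^ 3 := by
    rcases Nat.eq_zero_or_pos (w ^ 2 * d) with h | h
    · simp [h]
    · exact Nat.pow_le_pow_right h (by norm_num)
  obtain ⟨t, ht⟩ := exists_trIMMWeight_injective (w := w) hd
    ((Nat.cast_le.mpr hsq).trans hF.le)
  refine ⟨diagonal (trIMMWeight t), (diagonal_mem_lieAlg_iff _ _).mpr (eulerDerivation_trIMM t),
    fun a b hab => diagonal_apply_ne _ hab, fun a b hab => ?_⟩
  simpa using ht.ne hab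

theorem stmt10 (F : Type*) [Field F] (w d : ℕ) (hw : 2 ≤ w) (hd : 3 ≤ d)
    (hF : (((w ^ 2 * d) ^ 3 : ℕ) : Cardinal) < Cardinal.mk F) :
    ∃ E ∈ lieAlg (trIMM F w d),
      (∀ a b : Fin d × Fin w × Fin w, a ≠ b → E a b = 0) ∧
      (∀ a b : Fin d × Fin w × Fin w, a ≠ b → E a a ≠ E b b) :=
  stmt10_general F w d hd hF
end

section
/- Under the hypotheses of the Lie-algebra characterization of Tr-IMM: if f is a nonzero d-tensor with B_k ⊆ 𝔤_f for all k, then the coefficient in f of every set-multilinear monomial that is not a path monomial is zero. -/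
open Matrix MvPolynomial

/-!
A monomial `m` with one variable `x^{(k)}_{p k}` in each layer that is not a path monomial has a
broken link: `p k = (a, b)` and `p (k + 1) = (c, e)` with `b ≠ c`. For `M = E_{cb}` the element
of `B_k` gives the identity
`∑ i, x^{(k)}_{ic} ∂f/∂x^{(k)}_{ib} - ∑ j, x^{(k+1)}_{bj} ∂f/∂x^{(k+1)}_{cj} = 0`.
Its coefficient at the monomial obtained from `m` by exchanging `x^{(k)}_{ab}` for `x^{(k)}_{ac}`
receives a contribution only from the term `i = a`, and that contribution is `coeff m f`.
-/

theorem Finsupp.sum_univ_single_pair_apply {ι κ : Type*} [Fintype ι] [DecidableEq ι]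
    [DecidableEq κ] (p : ι → κ) (i : ι) (x : κ) :
    (∑ j, Finsupp.single (j, p j) 1 : ι × κ →₀ ℕ) (i, x) = if p i = x then 1 else 0 := by
  rw [Finsupp.finsetSum_apply, Finset.sum_eq_single i
    (fun j _ hj => Finsupp.single_eq_of_ne (by simp [Ne.symm hj])) (by simp)]
  simp [Finsupp.single_apply]

theorem Finsupp.exists_eq_sum_univ_single_pair {ι κ : Type*} [Fintype ι] [Fintype κ]
    (m : ι × κ →₀ ℕ) (hm : ∀ i, ∑ x, m (i, x) = 1) :
    ∃ p : ι → κ, m = ∑ i, Finsupp.single (i, p i) 1 := by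
  classical
  have hrow : ∀ i, ∃ x, ∀ y, m (i, y) = Finsupp.single x 1 y := by
    intro i
    obtain ⟨x, hx⟩ :=
      (Finsupp.sum_eq_one_iff (Finsupp.equivFunOnFinite.symm (fun y => m (i, y)))).1
        (by rw [Finsupp.sum_fintype _ _ (fun _ => rfl)]; exact hm i)
    exact ⟨x, fun y => by simpa using DFunLike.congr_fun hx y⟩
  choose p hp using hrow
  refine ⟨p, Finsupp.ext fun ⟨i, y⟩ => ?_⟩
  rw [Finsupp.sum_univ_single_pair_apply, hp, Finsupp.single_apply]

namespace MvPolynomial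

variable {σ R : Type*} [CommSemiring R] [DecidableEq σ]

theorem coeff_X_mul_eq_zero_of_apply_eq_zero {n : σ →₀ ℕ} {v : σ} (hv : n v = 0)
    (g : MvPolynomial σ R) : coeff n (X v * g) = 0 := by
  rw [coeff_X_mul', if_neg (by simpa using hv)]

theorem coeff_tsub_single_add_single_X_mul_pderiv (f : MvPolynomial σ R) {n : σ →₀ ℕ}
    {u : σ} (hu : n u ≠ 0) (v : σ) :
    coeff (n - Finsupp.single u 1 + Finsupp.single v 1) (X v * pderiv u f) = n u * coeff n f := by
  have hle : Finsupp.single u 1 ≤ n := Finsupp.single_le_iff.2 (Nat.one_le_iff_ne_zero.2 hu)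
  rw [coeff_X_mul', if_pos (by simp), add_tsub_cancel_right, coeff_pderiv,
    tsub_add_cancel_of_le hle, Finsupp.tsub_apply, Finsupp.single_eq_same, ← Nat.cast_add_one,
    Nat.sub_add_cancel (Nat.one_le_iff_ne_zero.2 hu), mul_comm]

end MvPolynomial

theorem sum_coeff_X_mul_pderiv_eq_zero_of_mem_lieAlg {F σ : Type*} [Field F] [Fintype σ]
    [DecidableEq σ] {f : MvPolynomial σ F} {E : Matrix σ σ F} (hE : E ∈ lieAlg f)
    (n : σ →₀ ℕ) : ∑ u, ∑ v, E u v * coeff n (X v * pderiv u f) = 0 := by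
  simpa [lieAlg, coeff_sum] using congrArg (coeff n) hE

open Fin.CommRing in
theorem Fin.add_one_ne_self {d : ℕ} [NeZero d] (hd : 2 ≤ d) (k : Fin d) : k + 1 ≠ k :=
  have : Nontrivial (Fin d) := Fin.nontrivial_iff_two_le.2 hd
  succ_ne_self k

section Bmat

variable {F : Type*} [Field F] {w d : ℕ} [NeZero d] (k : Fin d) {b c : Fin w}

theorem Bmat_single_ne_zero {u v : Fin d × Fin w × Fin w}
    (h : Bmat F w d k (Matrix.single c b 1) u v ≠ 0) :
    (∃ i, u = (k, i, b) ∧ v = (k, i, c)) ∨ (∃ j, u = (k + 1, c, j) ∧ v = (k + 1, b, j)) := by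
  obtain ⟨u₁, u₂, u₃⟩ := u
  obtain ⟨v₁, v₂, v₃⟩ := v
  simp only [Bmat, Matrix.single, Matrix.of_apply] at h
  split_ifs at h <;> aesop

theorem Bmat_single_apply_self (a : Fin w) :
    Bmat F w d k (Matrix.single c b 1) (k, a, b) (k, a, c) = 1 := by
  simp [Bmat]

theorem coeff_eq_zero_of_Bmat_single_mem_lieAlg
    {f : MvPolynomial (Fin d × Fin w × Fin w) F}
    (hB : Bmat F w d k (Matrix.single c b 1) ∈ lieAlg f) (hkk : k + 1 ≠ k)
    {m : (Fin d × Fin w × Fin w) →₀ ℕ} {a : Fin w} (hab : m (k, a, b) = 1)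
    (hc : ∀ i, m (k, i, c) = 0) (hb : ∀ j, m (k + 1, b, j) = 0) : coeff m f = 0 := by
  classical
  set n := m - Finsupp.single (k, a, b) 1 + Finsupp.single (k, a, c) 1
  have hvanish : ∀ u v, (u, v) ≠ ((k, a, b), (k, a, c)) →
      Bmat F w d k (Matrix.single c b 1) u v * coeff n (X v * pderiv u f) = 0 := by
    intro u v huv
    by_cases hE : Bmat F w d k (Matrix.single c b 1) u v = 0
    · rw [hE, zero_mul]
    refine mul_eq_zero_of_right _ (coeff_X_mul_eq_zero_of_apply_eq_zero ?_ _)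
    have hv : m v = 0 ∧ v ≠ (k, a, c) := by
      rcases Bmat_single_ne_zero k hE with ⟨i, rfl, rfl⟩ | ⟨j, rfl, rfl⟩
      · have hi : i ≠ a := by rintro rfl; exact huv rfl
        simp [hc, hi]
      · simp [hb, hkk]
    simp [n, Finsupp.single_apply, hv]
  have hsum := sum_coeff_X_mul_pderiv_eq_zero_of_mem_lieAlg hB n
  rwa [← Finset.sum_product', Finset.univ_product_univ,
    Finset.sum_eq_single ((k, a, b), (k, a, c)) (fun x _ hx => hvanish x.1 x.2 hx) (by simp),
    Bmat_single_apply_self, one_mul, coeff_tsub_single_add_single_X_mul_pderiv _ (by simp [hab]),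
    hab, Nat.cast_one, one_mul] at hsum

end Bmat

theorem stmt16_general (F : Type*) [Field F] (w d : ℕ) [NeZero d] (hd : 3 ≤ d)
    (f : MvPolynomial (Fin d × Fin w × Fin w) F)
    (hB : ∀ (k : Fin d) (M : Matrix (Fin w) (Fin w) F),
      Bmat F w d k M ∈ lieAlg f)
    (m : (Fin d × Fin w × Fin w) →₀ ℕ)
    (hm : ∀ k : Fin d, (∑ i : Fin w, ∑ j : Fin w, m (k, i, j)) = 1)
    (hnp : ¬ ∃ idx : Fin d → Fin w,
      m = ∑ k : Fin d,
        Finsupp.single ((k, idx k, idx (k + 1)) : Fin d × Fin w × Fin w) 1) :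
    MvPolynomial.coeff m f = 0 := by
  classical
  obtain ⟨p, hmp⟩ := Finsupp.exists_eq_sum_univ_single_pair (κ := Fin w × Fin w) m
    (fun k => by rw [Fintype.sum_prod_type]; exact hm k)
  have hmv : ∀ j x, m (j, x) = if p j = x then 1 else 0 := by
    rw [hmp]; exact Finsupp.sum_univ_single_pair_apply p
  obtain ⟨k, hk⟩ : ∃ k, (p k).2 ≠ (p (k + 1)).1 := by
    by_contra! hlink
    refine hnp ⟨fun k => (p k).1, hmp.trans (Finset.sum_congr rfl fun k _ => ?_)⟩
    simp only [← hlink k]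
  obtain ⟨⟨a, b⟩, hpk⟩ : ∃ q, p k = q := ⟨_, rfl⟩
  obtain ⟨⟨c, e⟩, hpk'⟩ : ∃ q, p (k + 1) = q := ⟨_, rfl⟩
  replace hk : b ≠ c := by simpa [hpk, hpk'] using hk
  exact coeff_eq_zero_of_Bmat_single_mem_lieAlg k (hB k (Matrix.single c b 1))
    (Fin.add_one_ne_self (by omega) k) (a := a) (by simp [hmv, hpk])
    (fun i => by simp [hmv, hpk, hk]) (fun j => by simp [hmv, hpk', hk.symm])

theorem stmt16 (F : Type*) [Field F] (w d : ℕ) [NeZero d] (hw : 2 ≤ w) (hd : 3 ≤ d)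
    (f : MvPolynomial (Fin d × Fin w × Fin w) F) (hf0 : f ≠ 0)
    (hsm : ∀ m ∈ f.support, ∀ k : Fin d,
      (∑ i : Fin w, ∑ j : Fin w, m (k, i, j)) = 1)
    (hB : ∀ (k : Fin d) (M : Matrix (Fin w) (Fin w) F),
      Bmat F w d k M ∈ lieAlg f)
    (m : (Fin d × Fin w × Fin w) →₀ ℕ)
    (hm : ∀ k : Fin d, (∑ i : Fin w, ∑ j : Fin w, m (k, i, j)) = 1)
    (hnp : ¬ ∃ idx : Fin d → Fin w,
      m = ∑ k : Fin d,
        Finsupp.single ((k, idx k, idx (k + 1)) : Fin d × Fin w × Fin w) 1) :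
    MvPolynomial.coeff m f = 0 :=
  stmt16_general F w d hd f hB m hm hnp
end

section
/- Suppose tr(Q_0 Q_1 ⋯ Q_{d-1}) = tr(C_0 Q_0 D_0 · C_1 Q_1 D_1 ⋯ C_{d-1} Q_{d-1} D_{d-1}) holds identically, where the Q_k are w×w matrices of distinct indeterminates in disjoint variable sets and C_k, D_k ∈ GL(w, F). Then there exist nonzero scalars α_0,...,α_{d-1} ∈ F with D_{d-1}·C_0 = α_0·I_w, D_k·C_{k+1} = α_{k+1}·I_w for 0 ≤ k ≤ d−2, and ∏_{k=0}^{d-1} α_k = 1. -/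
/-
Specialise the identity to rank-one matrices `M k = e_{s (k-1)} e_{t k}ᵀ`. The trace of a
cyclic product of rank-one matrices is the cyclic product of the intermediate dot products, so
with `G k = D k * C (k+1)` (indices mod `d`) the identity becomes
`∏ k, G k (t k) (s k) = ∏ k, δ (t k) (s k)` for all index tuples `s`, `t`. Taking `s = t`
constant shows that every factor `G k z z` is a unit; changing a single coordinate of `s` or
`t` then shows that each `G k` is a scalar matrix `β k • 1`, and `∏ k, β k = 1`.
-/

open Matrix MvPolynomial

theorem RingHom.map_trace_list_prod {R S : Type*} [CommRing R] [CommRing S] {m : Type*}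
    [Fintype m] [DecidableEq m] (φ : R →+* S) (l : List (Matrix m m R)) :
    φ (trace l.prod) = trace (l.map φ.mapMatrix).prod := by
  rw [AddMonoidHom.map_trace, ← map_list_prod]
  rfl

theorem prod_update_update {ι m M : Type*} [Fintype ι] [DecidableEq ι] [CommMonoid M]
    (f : ι → m → m → M) (c : ι → m) (j : ι) (x y : m) :
    ∏ k, f k (Function.update c j x k) (Function.update c j y k) =
      f j x y * ∏ k ∈ Finset.univ.erase j, f k (c k) (c k) := by
  rw [← Finset.mul_prod_erase _ _ (Finset.mem_univ j), Function.update_self,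
    Function.update_self]
  congr 1
  exact Finset.prod_congr rfl fun k hk => by
    rw [Function.update_of_ne (Finset.ne_of_mem_erase hk),
      Function.update_of_ne (Finset.ne_of_mem_erase hk)]

namespace Matrix

variable {R : Type*} [CommRing R] {m : Type*} [DecidableEq m]

theorem exists_eq_smul_one_of_prod_apply_eq_prod_one_apply {ι : Type*} [Fintype ι]
    [DecidableEq ι] (G : ι → Matrix m m R)
    (hG : ∀ s t : ι → m, ∏ k, G k (t k) (s k) = ∏ k, (1 : Matrix m m R) (t k) (s k)) :
    ∃ β : ι → R, (∀ k, G k = β k • 1) ∧ ∏ k, β k = 1 := by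
  rcases isEmpty_or_nonempty m with hm | ⟨⟨z⟩⟩
  · exact ⟨1, fun _ => Subsingleton.elim _ _, Finset.prod_const_one⟩
  have hrow : ∀ j x y,
      G j x y * ∏ k ∈ Finset.univ.erase j, G k z z = (1 : Matrix m m R) x y := by
    intro j x y
    have h := hG (Function.update (fun _ => z) j y) (Function.update (fun _ => z) j x)
    rwa [prod_update_update G, prod_update_update fun _ => (1 : Matrix m m R),
      Finset.prod_congr rfl fun k _ => one_apply_eq z, Finset.prod_const_one, mul_one] at h
  refine ⟨fun j => G j z z, fun j => ?_, by simpa using hG (fun _ => z) (fun _ => z)⟩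
  have hunit : IsUnit (∏ k ∈ Finset.univ.erase j, G k z z) :=
    IsUnit.of_mul_eq_one_right _ ((hrow j z z).trans (one_apply_eq z))
  ext x y
  apply hunit.mul_left_injective
  simp only [Matrix.smul_apply, smul_eq_mul]
  rw [hrow, mul_right_comm, hrow, one_apply_eq, one_mul]

variable [Fintype m]

theorem list_prod_ofFn_vecMulVec (n : ℕ) (u v : Fin (n + 1) → m → R) :
    (List.ofFn fun k => vecMulVec (u k) (v k)).prod =
      (∏ k : Fin n, v k.castSucc ⬝ᵥ u k.succ) • vecMulVec (u 0) (v (Fin.last n)) := by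
  induction n with
  | zero => simp
  | succ n ih =>
    rw [List.ofFn_succ, List.prod_cons, ih (fun k => u k.succ) (fun k => v k.succ),
      mul_smul_comm, vecMulVec_mul_vecMulVec, vecMulVec_smul, smul_smul, Fin.prod_univ_succ,
      mul_comm]
    simp only [Fin.succ_castSucc, Fin.succ_last, Fin.castSucc_zero]

theorem trace_list_prod_ofFn_vecMulVec (n : ℕ) (u v : Fin (n + 1) → m → R) :
    trace (List.ofFn fun k => vecMulVec (u k) (v k)).prod = ∏ k, v k ⬝ᵥ u (k + 1) := by
  rw [list_prod_ofFn_vecMulVec, trace_smul, trace_vecMulVec, smul_eq_mul,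
    Fin.prod_univ_castSucc, Fin.last_add_one, dotProduct_comm]
  simp only [Fin.coeSucc_eq_succ]

theorem trace_list_prod_ofFn_mul_vecMulVec_mul (n : ℕ) (C D : Fin (n + 1) → Matrix m m R)
    (u v : Fin (n + 1) → m → R) :
    trace (List.ofFn fun k => C k * vecMulVec (u k) (v k) * D k).prod =
      ∏ k, v k ᵥ* (D k * C (k + 1)) ⬝ᵥ u (k + 1) := by
  simp only [mul_vecMulVec, vecMulVec_mul, trace_list_prod_ofFn_vecMulVec, dotProduct_mulVec,
    vecMul_vecMul]

theorem prod_apply_eq_prod_one_apply_of_trace_eq {n : ℕ} {C D : Fin (n + 1) → Matrix m m R}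
    (h : ∀ M : Fin (n + 1) → Matrix m m R,
      trace (List.ofFn M).prod = trace (List.ofFn fun k => C k * M k * D k).prod)
    (s t : Fin (n + 1) → m) :
    ∏ k, (D k * C (k + 1)) (t k) (s k) = ∏ k, (1 : Matrix m m R) (t k) (s k) := by
  have hM := h fun k => vecMulVec (Pi.single (s (k - 1)) 1) (Pi.single (t k) 1)
  rw [trace_list_prod_ofFn_vecMulVec, trace_list_prod_ofFn_mul_vecMulVec_mul] at hM
  simpa [single_one_vecMul, dotProduct_single_one, single_one_dotProduct, one_apply,
    Pi.single_apply, @eq_comm _ (s _)] using hM.symm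

theorem trace_list_prod_ofFn_eq_of_generic {d : ℕ}
    (Q : Fin d → Matrix m m (MvPolynomial (Fin d × m × m) R))
    (hQ : ∀ k i j, Q k i j = X (k, i, j)) (C D : Fin d → Matrix m m R)
    (htr : trace (List.ofFn Q).prod =
      trace (List.ofFn fun k => (C k).map MvPolynomial.C * Q k * (D k).map MvPolynomial.C).prod)
    (M : Fin d → Matrix m m R) :
    trace (List.ofFn M).prod = trace (List.ofFn fun k => C k * M k * D k).prod := by
  set φ := eval fun p : Fin d × m × m => M p.1 p.2.1 p.2.2
  have hQM : ∀ k, φ.mapMatrix (Q k) = M k := fun k => by ext; simp [φ, hQ]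
  have hconst : ∀ A : Matrix m m R, φ.mapMatrix (A.map MvPolynomial.C) = A := fun A => by
    ext; simp [φ]
  have h := congrArg φ htr
  rw [RingHom.map_trace_list_prod, RingHom.map_trace_list_prod, List.map_ofFn,
    List.map_ofFn] at h
  convert h using 4 <;> funext k <;> simp only [Function.comp_apply, map_mul, hQM, hconst]

end Matrix

theorem stmt19 (F : Type*) [Field F] (w d : ℕ) (hd : 3 ≤ d)
    (Q : Fin d → Matrix (Fin w) (Fin w) (MvPolynomial (Fin d × Fin w × Fin w) F))
    (hQ : ∀ k i j, Q k i j = MvPolynomial.X (k, i, j))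
    (C D : Fin d → Matrix (Fin w) (Fin w) F)
    (htr : Matrix.trace (((List.finRange d).map Q).prod) =
        Matrix.trace (((List.finRange d).map (fun k =>
          (C k).map MvPolynomial.C * Q k * (D k).map MvPolynomial.C)).prod)) :
    ∃ α : Fin d → F, (∀ k, α k ≠ 0) ∧
      D ⟨d - 1, by omega⟩ * C ⟨0, by omega⟩ =
        α ⟨0, by omega⟩ • (1 : Matrix (Fin w) (Fin w) F) ∧
      (∀ (k : ℕ) (hk : k ≤ d - 2),
        D ⟨k, by omega⟩ * C ⟨k + 1, by omega⟩ =
          α ⟨k + 1, by omega⟩ • (1 : Matrix (Fin w) (Fin w) F)) ∧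
      ∏ k, α k = 1 := by
  obtain ⟨e, rfl⟩ : ∃ e, d = e + 1 := ⟨d - 1, by omega⟩
  simp only [← List.ofFn_eq_map] at htr
  obtain ⟨β, hβ, hprod⟩ := exists_eq_smul_one_of_prod_apply_eq_prod_one_apply _
    (prod_apply_eq_prod_one_apply_of_trace_eq (trace_list_prod_ofFn_eq_of_generic Q hQ C D htr))
  have hα : ∀ i j : Fin (e + 1), (j : ℕ) = (i + 1) % (e + 1) →
      D i * C j = β (j - 1) • 1 := by
    intro i j hj
    obtain rfl : j = i + 1 := Fin.ext (by simp [Fin.val_add, hj])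
    rw [add_sub_cancel_right, hβ]
  refine ⟨fun j => β (j - 1), fun j hj => ?_, hα _ _ (by simp), fun k hk => hα _ _ ?_, ?_⟩
  · simp [Finset.prod_eq_zero (Finset.mem_univ _) hj] at hprod
  · exact (Nat.mod_eq_of_lt (by omega)).symm
  · exact (Equiv.prod_comp (Equiv.subRight 1) β).trans hprod
end
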